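/- With LΓ_p defined as the Volkenborn integral of φ_p(x+t) (φ_p(y) = y(log_p(y)-1) for |y|_p ≥ 1, φ_p(y) = 0 otherwise), one has the reflection formula LΓ_p(1-x) + LΓ_p(x) = 0 for all x ∈ C_p. -/

import Mathlib

open Filter Topology Finset

/-!
Pair the terms of the two Riemann sums by `j ↦ p^n - 1 - j`: with `y = x + j` and `ε = p^n`, the
point `1 - x + (p^n - 1 - j)` is `ε - y`. For `|y| ≥ 1` one has `|ε - y| = |y|` and
`log_p(ε - y) = log_p y + log_p(1 - ε/y)`, and the logarithm series gives
`φ_p(ε - y) + φ_p(y) = ε log_p y + O(|ε|²)`. Hence `LΓ_p(1-x) + LΓ_p(x)` is the limit of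
`A_n + O(p^{-n})`, where `A_n` is the sum of `log_p(x + j)` over the `j < p^n` with `|x + j| ≥ 1`.
Finally `A_n → 0`: since `log_p(y + s p^n) - log_p y = O(p^{-n})`, the ultrametric inequality gives
`|A_{n+1}| ≤ max(|A_n| / p, p^{-n})`, so `A_n = O(p^{-n})`.
-/

theorem Finset.sum_range_mul_eq_sum_sum {M : Type*} [AddCommMonoid M] (f : ℕ → M) (a b : ℕ) :
    ∑ i ∈ range (a * b), f i = ∑ s ∈ range a, ∑ j ∈ range b, f (s * b + j) := by
  induction a with
  | zero => simp
  | succ a ih => rw [Nat.succ_mul, sum_range_add, ih, sum_range_succ]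

theorem Finset.sum_range_one_sub_add {R M : Type*} [Ring R] [AddCommMonoid M] (f : R → M) (x : R)
    (N : ℕ) : ∑ j ∈ range N, f (1 - x + j) = ∑ j ∈ range N, f (N - (x + j)) := by
  rw [← sum_range_reflect (fun j : ℕ ↦ f (1 - x + j)) N]
  refine sum_congr rfl fun j hj ↦ congrArg f ?_
  have hj := mem_range.mp hj
  rw [Nat.cast_sub (by omega), Nat.cast_sub (by omega), Nat.cast_one]
  abel

theorem IsUltrametricDist.norm_add_eq_left_of_norm_lt {S : Type*} [SeminormedAddGroup S]
    [IsUltrametricDist S] {a b : S} (h : ‖b‖ < ‖a‖) : ‖a + b‖ = ‖a‖ := by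
  rw [norm_add_eq_max_of_norm_ne_norm h.ne', max_eq_left h.le]

theorem IsUltrametricDist.one_le_norm_add_iff {S : Type*} [SeminormedAddGroup S]
    [IsUltrametricDist S] (y : S) {c : S} (hc : ‖c‖ < 1) : 1 ≤ ‖y + c‖ ↔ 1 ≤ ‖y‖ := by
  refine ⟨fun h ↦ not_lt.mp fun hy ↦ ?_, fun hy ↦ ?_⟩
  · exact h.not_gt ((norm_add_le_max y c).trans_lt (max_lt hy hc))
  · rwa [norm_add_eq_left_of_norm_lt (hc.trans_le hy)]

theorem Padic.inv_natCast_le_norm (p : ℕ) [Fact p.Prime] {k : ℕ} (hk : k ≠ 0) :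
    (k : ℝ)⁻¹ ≤ ‖(k : ℚ_[p])‖ := by
  have hp : (1 : ℝ) < p := mod_cast (Fact.out : p.Prime).one_lt
  have hle : (p : ℝ) ^ padicValNat p k ≤ k :=
    mod_cast Nat.le_of_dvd (Nat.pos_of_ne_zero hk) pow_padicValNat_dvd
  rw [Padic.norm_eq_zpow_neg_valuation (mod_cast hk), Padic.valuation_natCast, zpow_neg,
    zpow_natCast]
  exact inv_anti₀ (by positivity) hle

theorem add_two_le_two_pow_succ (n : ℕ) : (n + 2 : ℝ) ≤ 2 ^ (n + 1) :=
  mod_cast (Nat.lt_two_pow_self : n + 1 < 2 ^ (n + 1))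

theorem pow_le_of_le_one_half {r : ℝ} (hr0 : 0 ≤ r) (hr : r ≤ 1 / 2) {n : ℕ} (hn : n ≠ 0) :
    r ^ n ≤ 1 / 2 :=
  (pow_le_of_le_one hr0 (hr.trans (by norm_num)) hn).trans hr

theorem le_mul_pow_of_le_max {a : ℕ → ℝ} {r : ℝ} (hr : 0 ≤ r)
    (h : ∀ n, a (n + 1) ≤ max (r * a n) (r ^ (n + 1))) (n : ℕ) :
    a n ≤ max (a 0) 1 * r ^ n := by
  induction n with
  | zero => simp
  | succ n ih =>
    refine (h n).trans (max_le ?_ (le_mul_of_one_le_left (by positivity) (le_max_right _ _)))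
    calc r * a n ≤ r * (max (a 0) 1 * r ^ n) := mul_le_mul_of_nonneg_left ih hr
      _ = max (a 0) 1 * r ^ (n + 1) := by ring

section Logarithm

variable {K : Type*} [NormedField K] {logp : K → K}

theorem log_one_of_map_mul (hlog_mul : ∀ x y : K, x ≠ 0 → y ≠ 0 → logp (x * y) = logp x + logp y) :
    logp 1 = 0 := by
  simpa using hlog_mul 1 1 one_ne_zero one_ne_zero

theorem log_neg_of_map_mul [CharZero K]
    (hlog_mul : ∀ x y : K, x ≠ 0 → y ≠ 0 → logp (x * y) = logp x + logp y) {y : K}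
    (hy : y ≠ 0) : logp (-y) = logp y := by
  have hm1 : logp (-1) = 0 := by
    have h := hlog_mul (-1) (-1) (neg_ne_zero.mpr one_ne_zero) (neg_ne_zero.mpr one_ne_zero)
    rw [neg_mul_neg, one_mul, log_one_of_map_mul hlog_mul] at h
    exact add_self_eq_zero.mp h.symm
  rw [neg_eq_neg_one_mul, hlog_mul _ _ (neg_ne_zero.mpr one_ne_zero) hy, hm1, zero_add]

theorem norm_log_series_term_le (hnat : ∀ k : ℕ, k ≠ 0 → (k : ℝ)⁻¹ ≤ ‖(k : K)‖) (z : K)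
    (n : ℕ) :
    ‖(-1) ^ n * z ^ (n + 1) / (n + 1 : K)‖ ≤ ‖z‖ ^ (n + 1) * (n + 1) := by
  have hden : ((n : ℝ) + 1)⁻¹ ≤ ‖(n + 1 : K)‖ := mod_cast hnat (n + 1) n.succ_ne_zero
  rw [norm_div, norm_mul, norm_pow, norm_pow, norm_neg, norm_one, one_pow, one_mul,
    div_le_iff₀ ((inv_pos.mpr (by positivity)).trans_le hden)]
  calc ‖z‖ ^ (n + 1) = ‖z‖ ^ (n + 1) * ((n + 1) * ((n : ℝ) + 1)⁻¹) := by field_simp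
    _ ≤ ‖z‖ ^ (n + 1) * ((n + 1) * ‖(n + 1 : K)‖) := by gcongr
    _ = _ := by ring

theorem log_mul_one_add [IsUltrametricDist K]
    (hlog_mul : ∀ x y : K, x ≠ 0 → y ≠ 0 → logp (x * y) = logp x + logp y)
    {y c : K} (hy : y ≠ 0) (hc : ‖c‖ < 1) :
    logp (y * (1 + c)) = logp y + logp (1 + c) := by
  refine hlog_mul y _ hy (norm_pos_iff.mp ?_)
  exact one_pos.trans_le ((IsUltrametricDist.one_le_norm_add_iff 1 hc).mpr norm_one.ge)

variable [IsUltrametricDist K] (hnat : ∀ k : ℕ, k ≠ 0 → (k : ℝ)⁻¹ ≤ ‖(k : K)‖)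
  (hlog_series : ∀ x : K, ‖x - 1‖ < 1 →
    HasSum (fun n : ℕ => (-1) ^ n * (x - 1) ^ (n + 1) / (n + 1 : K)) (logp x))
include hnat hlog_series

theorem norm_log_sub_sub_one_le {x : K} (hx : ‖x - 1‖ ≤ 1 / 2) :
    ‖logp x - (x - 1)‖ ≤ 2 * ‖x - 1‖ ^ 2 := by
  have hsum := (hasSum_nat_add_iff' 1).mpr (hlog_series x (hx.trans_lt (by norm_num)))
  simp only [range_one, sum_singleton, pow_zero, one_mul, zero_add, pow_one, Nat.cast_zero,
    div_one] at hsum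
  rw [← hsum.tsum_eq]
  refine IsUltrametricDist.norm_tsum_le_of_forall_le_of_nonneg (by positivity) fun n ↦ ?_
  refine (norm_log_series_term_le hnat (x - 1) (n + 1)).trans ?_
  calc ‖x - 1‖ ^ (n + 1 + 1) * ((n + 1 : ℕ) + 1 : ℝ)
      = ‖x - 1‖ ^ 2 * (‖x - 1‖ ^ n * (n + 2)) := by push_cast; ring
    _ ≤ ‖x - 1‖ ^ 2 * ((1 / 2) ^ n * 2 ^ (n + 1)) := by
        gcongr
        exact add_two_le_two_pow_succ n
    _ = 2 * ‖x - 1‖ ^ 2 := by rw [one_div, inv_pow, pow_succ]; field_simp; ring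

theorem norm_log_le {x : K} (hx : ‖x - 1‖ ≤ 1 / 2) : ‖logp x‖ ≤ ‖x - 1‖ := by
  rw [← sub_add_cancel (logp x) (x - 1)]
  refine (IsUltrametricDist.norm_add_le_max _ _).trans (max_le ?_ le_rfl)
  calc ‖logp x - (x - 1)‖ ≤ 2 * ‖x - 1‖ ^ 2 := norm_log_sub_sub_one_le hnat hlog_series hx
    _ = (2 * ‖x - 1‖) * ‖x - 1‖ := by ring
    _ ≤ 1 * ‖x - 1‖ := by gcongr; linarith
    _ = ‖x - 1‖ := one_mul _

end Logarithm

section Kashio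

variable {K : Type*} [NormedField K]

noncomputable def kashioPhi (logp : K → K) (y : K) : K :=
  if 1 ≤ ‖y‖ then y * (logp y - 1) else 0

noncomputable def truncLog (logp : K → K) (y : K) : K := if 1 ≤ ‖y‖ then logp y else 0

def volkenbornSum (q : ℕ) (f : K → K) (x : K) (n : ℕ) : K :=
  ((q : K) ^ n)⁻¹ * ∑ j ∈ range (q ^ n), f (x + j)

variable [IsUltrametricDist K] {logp : K → K}
  (hlog_mul : ∀ x y : K, x ≠ 0 → y ≠ 0 → logp (x * y) = logp x + logp y)
  (hnat : ∀ k : ℕ, k ≠ 0 → (k : ℝ)⁻¹ ≤ ‖(k : K)‖)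
  (hlog_series : ∀ x : K, ‖x - 1‖ < 1 →
    HasSum (fun n : ℕ => (-1) ^ n * (x - 1) ^ (n + 1) / (n + 1 : K)) (logp x))
include hlog_mul hnat hlog_series

theorem norm_truncLog_add_sub_le (y : K) {c : K} (hc : ‖c‖ ≤ 1 / 2) :
    ‖truncLog logp (y + c) - truncLog logp y‖ ≤ ‖c‖ := by
  have hc1 : ‖c‖ < 1 := hc.trans_lt (by norm_num)
  have hiff := IsUltrametricDist.one_le_norm_add_iff y hc1
  by_cases hy : 1 ≤ ‖y‖
  · have hy0 : y ≠ 0 := norm_pos_iff.mp (one_pos.trans_le hy)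
    have hcy : ‖c / y‖ ≤ ‖c‖ := by rw [norm_div]; exact div_le_self (norm_nonneg c) hy
    have hfactor : y + c = y * (1 + c / y) := by field_simp
    rw [truncLog, truncLog, if_pos hy, if_pos (hiff.mpr hy), hfactor,
      log_mul_one_add hlog_mul hy0 (hcy.trans_lt hc1), add_sub_cancel_left]
    calc ‖logp (1 + c / y)‖ ≤ ‖1 + c / y - 1‖ :=
          norm_log_le hnat hlog_series (by rw [add_sub_cancel_left]; exact hcy.trans hc)
      _ ≤ ‖c‖ := by rw [add_sub_cancel_left]; exact hcy
  · simp [truncLog, hy, hiff]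

theorem norm_kashioPhi_sub_add_sub_le_of_one_le_norm [CharZero K] {ε y : K}
    (hε : ‖ε‖ ≤ 1 / 2) (hy : 1 ≤ ‖y‖) :
    ‖(ε - y) * (logp (ε - y) - 1) + y * (logp y - 1) - ε * logp y‖ ≤ 2 * ‖ε‖ ^ 2 := by
  have hy0 : y ≠ 0 := norm_pos_iff.mp (one_pos.trans_le hy)
  have hεy : ‖ε - y‖ = ‖y‖ := by
    rw [norm_sub_rev, sub_eq_add_neg,
      IsUltrametricDist.norm_add_eq_left_of_norm_lt (by rw [norm_neg]; linarith)]
  obtain ⟨u, rfl⟩ : ∃ u, ε = y * u := ⟨ε / y, by field_simp⟩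
  have hu : ‖u‖ ≤ ‖y * u‖ := by rw [norm_mul]; exact le_mul_of_one_le_left (norm_nonneg u) hy
  have hlog : logp (y * u - y) = logp y + logp (1 + -u) := by
    rw [← log_mul_one_add hlog_mul hy0 (by rw [norm_neg]; linarith), ← neg_sub,
      log_neg_of_map_mul hlog_mul (norm_pos_iff.mp (by rw [norm_sub_rev, hεy]; linarith))]
    congr 1
    ring
  have hR : ‖logp (1 + -u) + u‖ ≤ 2 * ‖u‖ ^ 2 := by
    simpa only [add_sub_cancel_left, sub_neg_eq_add, norm_neg] using
      norm_log_sub_sub_one_le hnat hlog_series (x := 1 + -u)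
        (by rw [add_sub_cancel_left, norm_neg]; exact hu.trans hε)
  -- the first-order terms cancel, leaving the quadratic remainder of the logarithm
  have hexpand : (y * u - y) * (logp (y * u - y) - 1) + y * (logp y - 1) - y * u * logp y
      = (y * u - y) * (logp (1 + -u) + u) + -(y * u * u) := by
    rw [hlog]; ring
  rw [hexpand]
  refine (IsUltrametricDist.norm_add_le_max _ _).trans (max_le ?_ ?_)
  · calc ‖(y * u - y) * (logp (1 + -u) + u)‖ ≤ ‖y‖ * (2 * ‖u‖ ^ 2) := by
          rw [norm_mul, hεy]; gcongr
      _ = 2 * ‖y * u‖ * ‖u‖ := by rw [norm_mul]; ring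
      _ ≤ 2 * ‖y * u‖ ^ 2 := by rw [sq, ← mul_assoc]; gcongr
  · calc ‖-(y * u * u)‖ = ‖y * u‖ * ‖u‖ := by rw [norm_neg, norm_mul]
      _ ≤ ‖y * u‖ * ‖y * u‖ := by gcongr
      _ ≤ 2 * ‖y * u‖ ^ 2 := by nlinarith [sq_nonneg ‖y * u‖]

theorem norm_kashioPhi_sub_add_sub_le [CharZero K] {ε : K} (hε : ‖ε‖ ≤ 1 / 2) (y : K) :
    ‖kashioPhi logp (ε - y) + kashioPhi logp y - ε * truncLog logp y‖ ≤ 2 * ‖ε‖ ^ 2 := by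
  have hiff : 1 ≤ ‖ε - y‖ ↔ 1 ≤ ‖y‖ := by
    rw [norm_sub_rev, sub_eq_add_neg]
    exact IsUltrametricDist.one_le_norm_add_iff y (by rw [norm_neg]; linarith)
  by_cases hy : 1 ≤ ‖y‖
  · rw [kashioPhi, kashioPhi, truncLog, if_pos hy, if_pos hy, if_pos (hiff.mpr hy)]
    exact norm_kashioPhi_sub_add_sub_le_of_one_le_norm hlog_mul hnat hlog_series hε hy
  · simp [kashioPhi, truncLog, hy, hiff]

theorem norm_sum_truncLog_succ_le {q : ℕ} (hq : ‖(q : K)‖ ≤ 1 / 2) (x : K) {n : ℕ}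
    (hn : n ≠ 0) :
    ‖∑ j ∈ range (q ^ (n + 1)), truncLog logp (x + j)‖
      ≤ max (‖(q : K)‖ * ‖∑ j ∈ range (q ^ n), truncLog logp (x + j)‖) (‖(q : K)‖ ^ n) := by
  have hsplit : ∑ j ∈ range (q ^ (n + 1)), truncLog logp (x + j)
      = q * ∑ j ∈ range (q ^ n), truncLog logp (x + j) + ∑ s ∈ range q, ∑ j ∈ range (q ^ n),
        (truncLog logp (x + j + s * (q : K) ^ n) - truncLog logp (x + j)) := by
    rw [pow_succ', sum_range_mul_eq_sum_sum]
    simp only [sum_sub_distrib, sum_const, card_range, nsmul_eq_mul, Nat.cast_add, Nat.cast_mul,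
      Nat.cast_pow, add_assoc, add_comm ((_ : ℕ) * (_ : K) ^ n)]
    ring
  rw [hsplit]
  refine (IsUltrametricDist.norm_add_le_max _ _).trans (max_le_max (norm_mul _ _).le ?_)
  refine IsUltrametricDist.norm_sum_le_of_forall_le_of_nonneg (by positivity) fun s _ ↦ ?_
  refine IsUltrametricDist.norm_sum_le_of_forall_le_of_nonneg (by positivity) fun j _ ↦ ?_
  have hc : ‖(s : K) * (q : K) ^ n‖ ≤ ‖(q : K)‖ ^ n := by
    rw [norm_mul, norm_pow]
    exact mul_le_of_le_one_left (by positivity) (IsUltrametricDist.norm_natCast_le_one K s)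
  exact (norm_truncLog_add_sub_le hlog_mul hnat hlog_series (x + j)
    (hc.trans (pow_le_of_le_one_half (norm_nonneg _) hq hn))).trans hc

theorem tendsto_sum_truncLog {q : ℕ} (hq : ‖(q : K)‖ ≤ 1 / 2) (x : K) :
    Tendsto (fun n ↦ ∑ j ∈ range (q ^ n), truncLog logp (x + j)) atTop (𝓝 0) := by
  have hbound := le_mul_pow_of_le_max
    (a := fun m ↦ ‖∑ j ∈ range (q ^ (m + 1)), truncLog logp (x + j)‖) (norm_nonneg _)
    fun m ↦ norm_sum_truncLog_succ_le hlog_mul hnat hlog_series hq x m.succ_ne_zero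
  refine (tendsto_add_atTop_iff_nat 1).mp (squeeze_zero_norm hbound ?_)
  simpa using (tendsto_pow_atTop_nhds_zero_of_lt_one (norm_nonneg _)
    (hq.trans_lt (by norm_num))).const_mul _

theorem tendsto_volkenbornSum_kashioPhi_one_sub_add [CharZero K] {q : ℕ} (hq0 : (q : K) ≠ 0)
    (hq : ‖(q : K)‖ ≤ 1 / 2) (x : K) :
    Tendsto (fun n ↦ volkenbornSum q (kashioPhi logp) (1 - x) n
      + volkenbornSum q (kashioPhi logp) x n) atTop (𝓝 0) := by
  set E : ℕ → K := fun n ↦ ∑ j ∈ range (q ^ n), (kashioPhi logp ((q : K) ^ n - (x + j))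
    + kashioPhi logp (x + j) - (q : K) ^ n * truncLog logp (x + j))
  have hsplit : ∀ n, volkenbornSum q (kashioPhi logp) (1 - x) n
      + volkenbornSum q (kashioPhi logp) x n
      = ∑ j ∈ range (q ^ n), truncLog logp (x + j) + ((q : K) ^ n)⁻¹ * E n := fun n ↦ by
    simp only [volkenbornSum, E, sum_range_one_sub_add, sum_sub_distrib, sum_add_distrib,
      ← mul_sum]
    push_cast
    field_simp
    ring
  have hE : ∀ n, n ≠ 0 → ‖((q : K) ^ n)⁻¹ * E n‖ ≤ 2 * ‖(q : K)‖ ^ n := fun n hn ↦ by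
    have hqn : ‖(q : K) ^ n‖ ≤ 1 / 2 :=
      norm_pow (q : K) n ▸ pow_le_of_le_one_half (norm_nonneg _) hq hn
    have hEn : ‖E n‖ ≤ 2 * ‖(q : K) ^ n‖ ^ 2 :=
      IsUltrametricDist.norm_sum_le_of_forall_le_of_nonneg (by positivity) fun j _ ↦
        norm_kashioPhi_sub_add_sub_le hlog_mul hnat hlog_series hqn (x + j)
    rw [norm_mul, norm_inv, ← div_eq_inv_mul, div_le_iff₀ (norm_pos_iff.mpr (pow_ne_zero n hq0))]
    calc ‖E n‖ ≤ 2 * ‖(q : K) ^ n‖ ^ 2 := hEn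
      _ = 2 * ‖(q : K)‖ ^ n * ‖(q : K) ^ n‖ := by rw [norm_pow]; ring
  have herr : Tendsto (fun n ↦ ((q : K) ^ n)⁻¹ * E n) atTop (𝓝 0) := by
    refine squeeze_zero_norm' (a := fun n ↦ 2 * ‖(q : K)‖ ^ n) ?_ ?_
    · filter_upwards [eventually_ne_atTop 0] with n hn using hE n hn
    · simpa using (tendsto_pow_atTop_nhds_zero_of_lt_one (norm_nonneg _)
        (hq.trans_lt (by norm_num))).const_mul 2
  simpa only [hsplit, add_zero] using (tendsto_sum_truncLog hlog_mul hnat hlog_series hq x).add herr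

end Kashio

theorem kashio_log_gamma_reflection_general (p : ℕ) [Fact p.Prime] (K : Type*)
    [NontriviallyNormedField K] [IsUltrametricDist K]
    [Algebra ℚ_[p] K] (hiso : ∀ q : ℚ_[p], ‖algebraMap ℚ_[p] K q‖ = ‖q‖)
    (logp : K → K)
    (hlog_mul : ∀ x y : K, x ≠ 0 → y ≠ 0 → logp (x * y) = logp x + logp y)
    (hlog_series : ∀ x : K, ‖x - 1‖ < 1 →
      HasSum (fun n : ℕ => (-1) ^ n * (x - 1) ^ (n + 1) / (n + 1 : K)) (logp x))
    (LG : K → K)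
    (hLG : ∀ x : K,
      Tendsto (fun n : ℕ => ((p : K) ^ n)⁻¹ * ∑ j ∈ Finset.range (p ^ n),
          (if 1 ≤ ‖x + (j : K)‖ then (x + (j : K)) * (logp (x + (j : K)) - 1) else 0))
        atTop (nhds (LG x)))
    (x : K) :
    LG (1 - x) + LG x = 0 := by
  have : CharZero K := charZero_of_injective_algebraMap (algebraMap ℚ_[p] K).injective
  have hnorm : ∀ k : ℕ, ‖(k : K)‖ = ‖(k : ℚ_[p])‖ := fun k ↦ by simpa using hiso k
  have hp : ‖(p : K)‖ = (p : ℝ)⁻¹ := by rw [hnorm, Padic.norm_p]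
  have hp_le : ‖(p : K)‖ ≤ 1 / 2 := by
    rw [hp, one_div]
    exact inv_anti₀ two_pos (mod_cast (Fact.out : p.Prime).two_le)
  have hnat : ∀ k : ℕ, k ≠ 0 → (k : ℝ)⁻¹ ≤ ‖(k : K)‖ := fun k hk ↦
    hnorm k ▸ Padic.inv_natCast_le_norm p hk
  exact tendsto_nhds_unique ((hLG (1 - x)).add (hLG x))
    (tendsto_volkenbornSum_kashioPhi_one_sub_add hlog_mul hnat hlog_series
      (Nat.cast_ne_zero.mpr (Fact.out : p.Prime).ne_zero) hp_le x)

/-- Reflection formula for Kashio's `p`-adic log-gamma function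
`LΓ_p(x) = ∫_{ℤ_p} φ_p(x+t) dt`: for all `x ∈ ℂ_p`,
`LΓ_p(1-x) + LΓ_p(x) = 0`. -/
theorem kashio_log_gamma_reflection (p : ℕ) [Fact p.Prime] (K : Type*)
    [NontriviallyNormedField K] [CompleteSpace K] [IsAlgClosed K] [IsUltrametricDist K]
    [Algebra ℚ_[p] K] (hiso : ∀ q : ℚ_[p], ‖algebraMap ℚ_[p] K q‖ = ‖q‖)
    (logp : K → K)
    (hlog_an : ∀ x : K, x ≠ 0 → AnalyticAt K logp x)
    (hlog_mul : ∀ x y : K, x ≠ 0 → y ≠ 0 → logp (x * y) = logp x + logp y)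
    (hlog_p : logp (p : K) = 0)
    (hlog_series : ∀ x : K, ‖x - 1‖ < 1 →
      HasSum (fun n : ℕ => (-1) ^ n * (x - 1) ^ (n + 1) / (n + 1 : K)) (logp x))
    (LG : K → K)
    (hLG : ∀ x : K,
      Tendsto (fun n : ℕ => ((p : K) ^ n)⁻¹ * ∑ j ∈ Finset.range (p ^ n),
          (if 1 ≤ ‖x + (j : K)‖ then (x + (j : K)) * (logp (x + (j : K)) - 1) else 0))
        atTop (nhds (LG x)))
    (x : K) :
    LG (1 - x) + LG x = 0 :=
  kashio_log_gamma_reflection_general p K hiso logp hlog_mul hlog_series LG hLG x
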